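/- Split collision timing (Lemma 2): every split node ((x, τ), (s, t), d) ∈ N (i.e. a node of N with s < 2 or t < 2) satisfies T(x) − 2^{−d}·(2 + |S|) ≤ τ ≤ T(x); that is, a split node of depth d lies below the target segment at its abscissa, but by at most 2^{−d}(2 + |S|). -/
import Mathlib


open Set

/-- The affine function whose graph over `[-1,1]` is the target segment
joining `(-1, s₀)` to `(1, t₀)`. -/
noncomputable def Tline (s₀ t₀ x : ℝ) : ℝ := (s₀ + t₀) / 2 + ((t₀ - s₀) / 2) * x

/-- The smallest set of nodes `((x, τ), (s, t), d)` generated by the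
root, delay and split rules of the slanted firing squad algorithm. -/
inductive Node (s₀ t₀ : ℝ) : (ℝ × ℝ) × (ℝ × ℝ) × ℕ → Prop
  | root : Node s₀ t₀ ((0, 0), (s₀, t₀), 0)
  | delay {x τ s t : ℝ} {d : ℕ} :
      Node s₀ t₀ ((x, τ), (s, t), d) → 2 ≤ s → 2 ≤ t →
      Node s₀ t₀ ((x, τ + (2:ℝ)^(-(d:ℤ))), (s - 1, t - 1), d)
  | splitL {x τ s t : ℝ} {d : ℕ} :
      Node s₀ t₀ ((x, τ), (s, t), d) → s < 2 ∨ t < 2 →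
      Node s₀ t₀ ((x - (2:ℝ)^(-((d:ℤ)+1)), τ + (2:ℝ)^(-((d:ℤ)+1))),
        (2*s - 1, s + t - 1), d + 1)
  | splitR {x τ s t : ℝ} {d : ℕ} :
      Node s₀ t₀ ((x, τ), (s, t), d) → s < 2 ∨ t < 2 →
      Node s₀ t₀ ((x + (2:ℝ)^(-((d:ℤ)+1)), τ + (2:ℝ)^(-((d:ℤ)+1))),
        (s + t - 1, 2*t - 1), d + 1)

private lemma half_pow (d : ℕ) : (2:ℝ)^(-((d:ℤ)+1)) = (2:ℝ)^(-(d:ℤ)) / 2 := by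
  rw [neg_add, zpow_add₀ (two_ne_zero)]
  norm_num
  ring

lemma node_inv (s₀ t₀ : ℝ) (hs₀ : 1 ≤ s₀) (ht₀ : 1 ≤ t₀) :
    ∀ p, Node s₀ t₀ p →
      1 ≤ p.2.1.1 ∧ 1 ≤ p.2.1.2 ∧
      p.1.2 + (2:ℝ)^(-(p.2.2:ℤ)) * p.2.1.1
        = Tline s₀ t₀ (p.1.1 - (2:ℝ)^(-(p.2.2:ℤ))) ∧
      p.1.2 + (2:ℝ)^(-(p.2.2:ℤ)) * p.2.1.2
        = Tline s₀ t₀ (p.1.1 + (2:ℝ)^(-(p.2.2:ℤ))) := by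
  intro p h
  induction h with
  | root =>
      refine ⟨hs₀, ht₀, ?_, ?_⟩ <;> simp [Tline] <;> ring
  | delay h hs ht ih =>
      obtain ⟨h1, h2, h3, h4⟩ := ih
      dsimp only at *
      refine ⟨by linarith, by linarith, ?_, ?_⟩
      · simp only [Tline] at h3 ⊢; linear_combination h3
      · simp only [Tline] at h4 ⊢; linear_combination h4
  | splitL h hlt ih =>
      obtain ⟨h1, h2, h3, h4⟩ := ih
      dsimp only at *
      push_cast
      rw [half_pow]
      refine ⟨by linarith, by linarith, ?_, ?_⟩
      · simp only [Tline] at h3 h4 ⊢; linear_combination h3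
      · simp only [Tline] at h3 h4 ⊢; linear_combination h3/2 + h4/2
  | splitR h hlt ih =>
      obtain ⟨h1, h2, h3, h4⟩ := ih
      dsimp only at *
      push_cast
      rw [half_pow]
      refine ⟨by linarith, by linarith, ?_, ?_⟩
      · simp only [Tline] at h3 h4 ⊢; linear_combination h3/2 + h4/2
      · simp only [Tline] at h3 h4 ⊢; linear_combination h4

theorem stmt5 (s₀ t₀ : ℝ) (hs₀ : 1 ≤ s₀) (ht₀ : 1 ≤ t₀)
    (x τ s t : ℝ) (d : ℕ) (h : Node s₀ t₀ ((x, τ), (s, t), d))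
    (hsplit : s < 2 ∨ t < 2) :
    Tline s₀ t₀ x - (2:ℝ)^(-(d:ℤ)) * (2 + |(t₀ - s₀) / 2|) ≤ τ ∧
    τ ≤ Tline s₀ t₀ x := by
  obtain ⟨h1, h2, h3, h4⟩ := node_inv s₀ t₀ hs₀ ht₀ _ h
  dsimp only at h1 h2 h3 h4
  set e : ℝ := (2:ℝ)^(-(d:ℤ)) with he_def
  have he : (0:ℝ) < e := zpow_pos (by norm_num) _
  set S : ℝ := (t₀ - s₀) / 2 with hS
  have hsum : 2*τ + e*(s+t) = 2 * Tline s₀ t₀ x := by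
    simp only [Tline] at h3 h4 ⊢
    linear_combination h3 + h4
  have hrel : e * (s - t + 2*S) = 0 := by
    simp only [Tline] at h3 h4
    linear_combination h3 - h4
  have hst : s - t + 2*S = 0 := by
    rcases mul_eq_zero.mp hrel with h' | h'
    · exact absurd h' (ne_of_gt he)
    · exact h'
  constructor
  · have hb : s + t ≤ 4 + 2*|S| := by
      rcases hsplit with hlt | hlt
      · linarith [neg_abs_le S, le_abs_self S]
      · linarith [neg_abs_le S, le_abs_self S]
    have := mul_le_mul_of_nonneg_left hb he.le
    linarith
  · nlinarith [mul_le_mul_of_nonneg_left (show (2:ℝ) ≤ s + t by linarith) he.le]
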